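/- arXiv:2008.11661 — 2 statements merged into one kernel-verified Lean document; each statement's English description precedes it below -/
import Mathlib

section
/- Faà di Bruno's formula: if f(t) = Σ_{n≥0} f_n t^n/n! and g(t) = Σ_{n≥1} g_n t^n/n! are exponential formal power series with g(0) = 0, then the coefficients of the composition h = f ∘ g satisfy h_n = Σ_{k=0}^{n} f_k · B_{n,k}(g_1, g_2, ...), where B_{n,k} are the partial Bell polynomials. -/
/-!
For a finite set `A`, the binomial convolution of exponential coefficients shows, by splitting off
the first block and inducting on `k`, that `|A|!·[t^|A|] g^k` is the sum over ordered `k`-tuples of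
pairwise disjoint blocks with union `A` of the products of the `g_{|block|}`. Since `g_0 = 0`, only
tuples of nonempty blocks contribute, and these are exactly the `k!` orderings of the partitions of
`A` into `k` blocks. Hence `n!·[tⁿ] g^k = k!·B_{n,k}(g_1, g_2, …)`, and multiplying by `f_k / k!`
and summing over `k` gives the formula.
-/
open PowerSeries Finset

/-- Composition `f(g(X))` of formal power series (meaningful when `g` has zero
constant term). -/
noncomputable def pcomp (f g : ℚ⟦X⟧) : ℚ⟦X⟧ :=
  PowerSeries.mk fun n => ∑ k ∈ Finset.range (n + 1),
    PowerSeries.coeff k f * PowerSeries.coeff n (g ^ k)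

/-- Division of a power series by `X` (dropping the constant term). -/
noncomputable def shiftDiv (f : ℚ⟦X⟧) : ℚ⟦X⟧ :=
  PowerSeries.mk fun n => PowerSeries.coeff (n + 1) f


/- The partial Bell polynomial `B_{n,k}(x₁, x₂, …)`: the sum over all set
partitions of `{1,…,n}` into `k` nonempty blocks of the products of
`x_{block size}` over the blocks. -/
open Classical in
noncomputable def Bell (x : ℕ → ℚ) (n k : ℕ) : ℚ :=
  ∑ P ∈ Finset.univ.filter (fun P : Finset (Finset (Fin n)) =>
      P.card = k ∧ (∀ p ∈ P, p.Nonempty) ∧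
      (∀ p ∈ P, ∀ q ∈ P, p ≠ q → p ∩ q = ∅) ∧ P.sup id = Finset.univ),
    ∏ p ∈ P, x p.card

open Function

theorem Fin.pairwise_cons_iff {β : Type*} {r : β → β → Prop} [Std.Symm r] {k : ℕ} {a : β}
    {q : Fin k → β} :
    Pairwise (r on (Fin.cons a q : Fin (k + 1) → β)) ↔
      (∀ i, r a (q i)) ∧ Pairwise (r on q) := by
  constructor
  · intro h
    exact ⟨fun i => h (Fin.succ_ne_zero i).symm,
      fun i j hij => h (Fin.succ_injective _ |>.ne hij)⟩
  · rintro ⟨h0, hq⟩ i j hij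
    cases i using Fin.cases <;> cases j using Fin.cases
    · exact absurd rfl hij
    · exact h0 _
    · exact Std.Symm.symm _ _ (h0 _)
    · exact hq fun h => hij (congrArg _ h)

theorem Fin.sup_univ_cons {β : Type*} [SemilatticeSup β] [OrderBot β] {k : ℕ} (a : β)
    (q : Fin k → β) : univ.sup (Fin.cons a q : Fin (k + 1) → β) = a ⊔ univ.sup q := by
  rw [Fin.univ_succ, sup_cons, sup_map]
  rfl

theorem disjoint_and_sup_eq_iff {β : Type*} [GeneralizedBooleanAlgebra β] {a b c : β} :
    Disjoint a b ∧ a ⊔ b = c ↔ a ≤ c ∧ b = c \ a := by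
  constructor
  · rintro ⟨hab, rfl⟩
    exact ⟨le_sup_left, hab.sup_sdiff_cancel_left.symm⟩
  · rintro ⟨hac, rfl⟩
    exact ⟨disjoint_sdiff_self_right, sup_sdiff_cancel_right hac⟩

theorem Pairwise.injective_of_disjoint_of_ne_bot {ι β : Type*} [PartialOrder β] [OrderBot β]
    {p : ι → β} (hd : Pairwise (Disjoint on p)) (hne : ∀ i, p i ≠ ⊥) : Injective p := by
  intro i j hij
  by_contra h
  have hdij : Disjoint (p i) (p j) := hd h
  rw [hij, disjoint_self] at hdij
  exact hne j hdij

theorem Finset.image_univ_equiv_coe {ι β : Type*} [Fintype ι] [DecidableEq β] {P : Finset β}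
    (e : ι ≃ P) : univ.image (fun i => (e i : β)) = P := by
  change univ.image (Subtype.val ∘ e) = P
  rw [← image_image, image_univ_equiv, univ_eq_attach, attach_image_val]

theorem PowerSeries.factorial_mul_coeff_mul {R : Type*} [CommSemiring R] (f g : R⟦X⟧)
    (n : ℕ) :
    (n.factorial : R) * coeff n (f * g) = ∑ j ∈ range (n + 1),
      n.choose j • ((j.factorial : R) * coeff j f * ((n - j).factorial * coeff (n - j) g)) := by
  rw [coeff_mul, Nat.sum_antidiagonal_eq_sum_range_succ_mk, mul_sum]
  refine sum_congr rfl fun j hj => ?_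
  rw [nsmul_eq_mul, ← Nat.choose_mul_factorial_mul_factorial (Nat.lt_succ_iff.1 (mem_range.1 hj))]
  push_cast
  ring

section DisjointTuples

variable {α R : Type*} [Fintype α] [DecidableEq α] [CommSemiring R]

open Classical in
noncomputable def disjointTuples (k : ℕ) (A : Finset α) : Finset (Fin k → Finset α) :=
  {p | Pairwise (Disjoint on p) ∧ univ.sup p = A}

theorem mem_disjointTuples {k : ℕ} {A : Finset α} {p : Fin k → Finset α} :
    p ∈ disjointTuples k A ↔ Pairwise (Disjoint on p) ∧ univ.sup p = A := by
  simp [disjointTuples]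

theorem cons_mem_disjointTuples {k : ℕ} {A T : Finset α} {q : Fin k → Finset α} :
    Fin.cons T q ∈ disjointTuples (k + 1) A ↔ T ⊆ A ∧ q ∈ disjointTuples k (A \ T) := by
  have hdisj : (∀ i, Disjoint T (q i)) ↔ Disjoint T (univ.sup q) := by
    simp only [Finset.disjoint_sup_right, mem_univ, forall_const]
  rw [mem_disjointTuples, mem_disjointTuples, Fin.pairwise_cons_iff, Fin.sup_univ_cons, hdisj]
  constructor
  · rintro ⟨⟨hT, hq⟩, hA⟩
    obtain ⟨hTA, hqA⟩ := disjoint_and_sup_eq_iff.1 ⟨hT, hA⟩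
    exact ⟨hTA, hq, hqA⟩
  · rintro ⟨hTA, hq, hqA⟩
    obtain ⟨hT, hA⟩ := disjoint_and_sup_eq_iff.2 ⟨hTA, hqA⟩
    exact ⟨⟨hT, hq⟩, hA⟩

noncomputable def disjointTupleSum (c : ℕ → R) (k : ℕ) (A : Finset α) : R :=
  ∑ p ∈ disjointTuples k A, ∏ i, c (p i).card

theorem disjointTupleSum_succ (c : ℕ → R) (k : ℕ) (A : Finset α) :
    disjointTupleSum c (k + 1) A =
      ∑ T ∈ A.powerset, c T.card * disjointTupleSum c k (A \ T) := by
  let e := (Fin.consEquiv fun _ : Fin (k + 1) => Finset α).symm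
  have hmem : ∀ x, x ∈ (disjointTuples (k + 1) A).map e.toEmbedding ↔
      x.1 ∈ A.powerset ∧ x.2 ∈ disjointTuples k (A \ x.1) := fun x => by
    rw [mem_map_equiv, mem_powerset, ← cons_mem_disjointTuples]
    rfl
  simp only [disjointTupleSum, mul_sum]
  calc ∑ p ∈ disjointTuples (k + 1) A, ∏ i, c (p i).card
      = ∑ x ∈ (disjointTuples (k + 1) A).map e.toEmbedding,
          c x.1.card * ∏ i, c (x.2 i).card := by
        rw [sum_map]
        refine sum_congr rfl fun p _ => ?_
        rw [Fin.prod_univ_succ]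
        rfl
    _ = _ := sum_finset_product _ _ _ hmem

theorem disjointTupleSum_zero (c : ℕ → R) (A : Finset α) :
    disjointTupleSum c 0 A = if A = ∅ then 1 else 0 := by
  by_cases hA : A = ∅ <;> simp [disjointTupleSum, disjointTuples, hA, eq_comm]

theorem disjointTupleSum_factorial_mul_coeff (g : R⟦X⟧) (k : ℕ) (A : Finset α) :
    disjointTupleSum (fun m => (m.factorial : R) * coeff m g) k A =
      A.card.factorial * coeff A.card (g ^ k) := by
  induction k generalizing A with
  | zero =>
    by_cases hA : A = ∅ <;> simp [disjointTupleSum_zero, coeff_one, hA]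
  | succ k ih =>
    rw [disjointTupleSum_succ, pow_succ', factorial_mul_coeff_mul,
      ← sum_powerset_apply_card (fun j => (j.factorial : R) * coeff j g *
        ((A.card - j).factorial * coeff (A.card - j) (g ^ k)))]
    refine sum_congr rfl fun T hT => ?_
    rw [ih, card_sdiff_of_subset (mem_powerset.1 hT)]

variable (α) in
open Classical in
noncomputable def setPartitions (k : ℕ) : Finset (Finset (Finset α)) :=
  {P | P.card = k ∧ (∀ p ∈ P, p.Nonempty) ∧
    (∀ p ∈ P, ∀ q ∈ P, p ≠ q → p ∩ q = ∅) ∧ P.sup id = univ}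

theorem Bell_eq_sum_setPartitions (x : ℕ → ℚ) (n k : ℕ) :
    Bell x n k = ∑ P ∈ setPartitions (Fin n) k, ∏ p ∈ P, x p.card :=
  rfl

theorem image_mem_setPartitions {k : ℕ} {p : Fin k → Finset α}
    (hp : p ∈ disjointTuples k univ) (hne : ∀ i, (p i).Nonempty) :
    univ.image p ∈ setPartitions α k := by
  obtain ⟨hd, hs⟩ := mem_disjointTuples.1 hp
  have hinj := hd.injective_of_disjoint_of_ne_bot fun i => (hne i).ne_empty
  simp only [setPartitions, mem_filter, mem_univ, true_and, forall_mem_image, sup_image,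
    true_implies]
  exact ⟨by rw [card_image_of_injective _ hinj, card_univ, Fintype.card_fin], fun i => hne i,
    fun i j hij => disjoint_iff_inter_eq_empty.1 (hd fun h => hij (congrArg p h)), hs⟩

theorem mem_disjointTuples_image_eq_iff {k : ℕ} {P : Finset (Finset α)}
    (hP : P ∈ setPartitions α k) (p : Fin k → Finset α) :
    (p ∈ disjointTuples k univ ∧ ∀ i, (p i).Nonempty) ∧ univ.image p = P ↔
      ∃ e : Fin k ≃ P, (fun i => (e i : Finset α)) = p := by
  simp only [setPartitions, mem_filter, mem_univ, true_and] at hP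
  obtain ⟨hPk, hPne, hPdisj, hPsup⟩ := hP
  constructor
  · rintro ⟨⟨hp, hne⟩, rfl⟩
    have hinj := (mem_disjointTuples.1 hp).1.injective_of_disjoint_of_ne_bot
      fun i => (hne i).ne_empty
    let f : Fin k → univ.image p := fun i => ⟨p i, mem_image_of_mem p (mem_univ i)⟩
    have hf : Bijective f := (Fintype.bijective_iff_injective_and_card f).2
      ⟨fun i j h => hinj (congrArg Subtype.val h),
        by rw [Fintype.card_fin, Fintype.card_coe, hPk]⟩
    exact ⟨Equiv.ofBijective f hf, rfl⟩
  · rintro ⟨e, rfl⟩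
    have himg := image_univ_equiv_coe e
    refine ⟨⟨mem_disjointTuples.2 ⟨fun i j hij => ?_, ?_⟩, fun i => hPne _ (e i).2⟩,
      himg⟩
    · exact disjoint_iff_inter_eq_empty.2 (hPdisj _ (e i).2 _ (e j).2
        fun h => hij (e.injective (Subtype.ext h)))
    · rw [← hPsup]
      exact (sup_image univ (fun i => (e i : Finset α)) id).symm.trans
        (congrArg (fun s => s.sup id) himg)

theorem disjointTupleSum_univ (c : ℕ → R) (hc : c 0 = 0) (k : ℕ) :
    disjointTupleSum c k (univ : Finset α) =
      k.factorial * ∑ P ∈ setPartitions α k, ∏ p ∈ P, c p.card := by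
  have hnonempty : ∀ p ∈ disjointTuples k (univ : Finset α),
      ∏ i, c (p i).card ≠ 0 → ∀ i, (p i).Nonempty :=
    fun p _ h i => by
      by_contra hi
      refine h (prod_eq_zero (mem_univ i) ?_)
      rw [not_nonempty_iff_eq_empty.1 hi, card_empty, hc]
  have hmaps : ∀ p ∈ {p ∈ disjointTuples k (univ : Finset α) | ∀ i, (p i).Nonempty},
      univ.image p ∈ setPartitions α k := fun p hp =>
    image_mem_setPartitions (mem_filter.1 hp).1 (mem_filter.1 hp).2
  rw [disjointTupleSum, ← sum_filter_of_ne hnonempty, ← sum_fiberwise_of_maps_to hmaps, mul_sum]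
  refine sum_congr rfl fun P hP => ?_
  have hfiber :
      {p ∈ {p ∈ disjointTuples k (univ : Finset α) | ∀ i, (p i).Nonempty} | univ.image p = P} =
        univ.image fun e : Fin k ≃ P => fun i => (e i : Finset α) := by
    ext p
    simp only [mem_filter, mem_image, mem_univ, true_and, mem_disjointTuples_image_eq_iff hP]
  have hinj : Injective fun e : Fin k ≃ P => fun i => (e i : Finset α) :=
    fun e e' h => Equiv.ext fun i => Subtype.ext (congrFun h i)
  have hprod : ∀ e : Fin k ≃ P, ∏ i, c (e i : Finset α).card = ∏ p ∈ P, c p.card :=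
    fun e => (e.prod_comp fun q : P => c (q : Finset α).card).trans
      (prod_coe_sort P fun p => c p.card)
  have hcard : P.card = k := (mem_filter.1 hP).2.1
  rw [hfiber, sum_image fun e _ e' _ h => hinj h, sum_congr rfl fun e _ => hprod e, sum_const,
    card_univ, Fintype.card_equiv (Fintype.equivOfCardEq (by simp [hcard])), Fintype.card_fin,
    nsmul_eq_mul]

end DisjointTuples

/-- Faà di Bruno's formula: if `g(0) = 0` then the exponential coefficients
`h_n = n!·[tⁿ](f ∘ g)` satisfy `h_n = Σ_{k=0}^n f_k · B_{n,k}(g₁, g₂, …)`,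
where `f_k = k!·[tᵏ]f` and `g_m = m!·[tᵐ]g`. -/
theorem faa_di_bruno (f g : ℚ⟦X⟧) (hg : PowerSeries.constantCoeff g = 0) (n : ℕ) :
    (n.factorial : ℚ) * PowerSeries.coeff n (pcomp f g) =
      ∑ k ∈ Finset.range (n + 1),
        (k.factorial : ℚ) * PowerSeries.coeff k f *
          Bell (fun m => (m.factorial : ℚ) * PowerSeries.coeff m g) n k := by
  set c : ℕ → ℚ := fun m => m.factorial * coeff m g
  have hc : c 0 = 0 := by
    simp [c, coeff_zero_eq_constantCoeff, hg]
  rw [pcomp, coeff_mk, mul_sum]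
  refine sum_congr rfl fun k _ => ?_
  have hcoeff := disjointTupleSum_factorial_mul_coeff g k (univ : Finset (Fin n))
  rw [disjointTupleSum_univ _ hc, ← Bell_eq_sum_setPartitions c, card_univ, Fintype.card_fin]
    at hcoeff
  rw [mul_left_comm, ← hcoeff]
  ring
end

section
/- Suppose I_0(x), Z(x), B(x) are formal power series with I_0(0) = 0 satisfying: (i) I_0(x) = x + 2x²·I_0'(x)/(1 - I_0(x)); (ii) Z(x) = x·(1/(1 - I_0(x)))²; (iii) Z(x) = x·B(Z(x)) where B(0) = 1. Then I_0(x) = x/(1 - x·B'(Z(x))). -/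
/-!
Write `U = (1 - I₀)⁻¹`, so that `Z = X U²`. Differentiating `U` and substituting (i) shows
`I₀ Z = X² Z'`. Differentiating `Z = X B(Z)` by the chain rule gives `(1 - X B'(Z)) X Z' = Z`.
Multiplying the second identity by `I₀` and using the first, `I₀ (1 - X B'(Z)) X Z' = X · X Z'`,
and `X Z'` may be cancelled in the domain `ℚ⟦X⟧` because it is nonzero, `Z` being nonzero.
-/

open PowerSeries Finset

theorem PowerSeries.coeff_pow_eq_zero_of_lt {R : Type*} [CommSemiring R] {g : R⟦X⟧}
    (hg : constantCoeff g = 0) {n k : ℕ} (h : n < k) : coeff n (g ^ k) = 0 :=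
  X_pow_dvd_iff.1 (pow_dvd_pow_of_dvd (X_dvd_iff.2 hg) k) n h

theorem pcomp_eq_subst (f : ℚ⟦X⟧) {g : ℚ⟦X⟧} (hg : constantCoeff g = 0) :
    pcomp f g = f.subst g := by
  ext n
  rw [pcomp, coeff_mk, coeff_subst' (.of_constantCoeff_zero' hg)]
  refine (finsum_eq_sum_of_support_subset _ fun k hk => ?_).symm
  rw [Finset.coe_range, Set.mem_Iio, Nat.lt_succ_iff]
  by_contra! hnk
  exact hk (by simp only [coeff_pow_eq_zero_of_lt hg hnk, mul_zero])

theorem mul_eq_X_sq_mul_derivative {k : Type*} [Field k] {I Z : k⟦X⟧}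
    (hI : I = X + 2 * X ^ 2 * d⁄dX k I * (1 - I)⁻¹) (hZ : Z = X * ((1 - I)⁻¹) ^ 2) :
    I * Z = X ^ 2 * d⁄dX k Z := by
  have hZ' : d⁄dX k Z = ((1 - I)⁻¹) ^ 2 + 2 * X * d⁄dX k I * ((1 - I)⁻¹) ^ 3 := by
    rw [hZ, Derivation.leibniz, Derivation.leibniz_pow, derivative_inv', map_sub,
      Derivation.map_one_eq_zero, derivative_X, smul_eq_mul, smul_eq_mul, nsmul_eq_mul]
    push_cast
    ring
  rw [hZ', hZ]
  nth_rw 1 [hI]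
  ring

theorem one_sub_X_mul_subst_derivative_mul {R : Type*} [CommRing R] {B Z : R⟦X⟧}
    (hZ : Z = X * B.subst Z) :
    (1 - X * (d⁄dX R B).subst Z) * (X * d⁄dX R Z) = Z := by
  have hZ0 : constantCoeff Z = 0 := by rw [hZ]; simp
  have hZ' : d⁄dX R Z = B.subst Z + X * ((d⁄dX R B).subst Z * d⁄dX R Z) := by
    nth_rw 1 [hZ]
    rw [Derivation.leibniz, derivative_subst (.of_constantCoeff_zero' hZ0), derivative_X,
      smul_eq_mul, smul_eq_mul]
    ring
  nth_rw 3 [hZ]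
  linear_combination X * hZ'

theorem indecomposable_formula_general (I₀ Z B : ℚ⟦X⟧)
    (hI0 : PowerSeries.constantCoeff I₀ = 0)
    (h1 : I₀ = X + 2 * X ^ 2 * d⁄dX ℚ I₀ * (1 - I₀)⁻¹)
    (h2 : Z = X * ((1 - I₀)⁻¹) ^ 2)
    (h3 : Z = X * pcomp B Z) :
    I₀ = X * (1 - X * pcomp (d⁄dX ℚ B) Z)⁻¹ := by
  have hZ0 : constantCoeff Z = 0 := by rw [h2]; simp
  rw [pcomp_eq_subst _ hZ0] at h3 ⊢
  have hchain := one_sub_X_mul_subst_derivative_mul h3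
  have hZ : Z ≠ 0 := by
    rw [h2]
    exact mul_ne_zero X_ne_zero (pow_ne_zero 2 (by simp [PowerSeries.inv_eq_zero, hI0]))
  have hXZ' : X * d⁄dX ℚ Z ≠ 0 := fun h => hZ (by rw [← hchain, h, mul_zero])
  have hmain : I₀ * (1 - X * (d⁄dX ℚ B).subst Z) = X :=
    mul_right_cancel₀ hXZ' (by linear_combination I₀ * hchain + mul_eq_X_sq_mul_derivative h1 h2)
  exact (eq_mul_inv_iff_mul_eq (by simp)).2 hmain

/-- If `I₀(0) = 0`, `I₀ = x + 2x²·I₀'/(1-I₀)`, `Z = x·(1/(1-I₀))²`, and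
`Z = x·B(Z)` with `B(0) = 1`, then `I₀ = x/(1 - x·B'(Z))`. -/
theorem indecomposable_formula (I₀ Z B : ℚ⟦X⟧)
    (hI0 : PowerSeries.constantCoeff I₀ = 0)
    (hB0 : PowerSeries.constantCoeff B = 1)
    (h1 : I₀ = X + 2 * X ^ 2 * d⁄dX ℚ I₀ * (1 - I₀)⁻¹)
    (h2 : Z = X * ((1 - I₀)⁻¹) ^ 2)
    (h3 : Z = X * pcomp B Z) :
    I₀ = X * (1 - X * pcomp (d⁄dX ℚ B) Z)⁻¹ :=
  indecomposable_formula_general I₀ Z B hI0 h1 h2 h3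
end
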